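/- Let A and B be m×n complex matrices and E = B − A. Define δ₁ := max{‖A†‖₂⁴, ‖B†‖₂⁴}·(‖E‖_F² − max{‖AA†EB†‖_F²/‖B†‖₂², ‖A†EB†B‖_F²/‖A†‖₂²}) and δ₂ := max{‖A†‖₂⁴, ‖B†‖₂⁴}·(‖E‖_F² − max{‖BB†EA†‖_F²/‖A†‖₂², ‖B†EA†A‖_F²/‖B†‖₂²}). Then ‖B† − A†‖_F² ≤ (1/2)·(δ₁ + δ₂ + ‖A†EB†‖_F² + ‖B†EA†‖_F²), and moreover δ₁ + δ₂ ≤ 2·max{‖A†‖₂⁴, ‖B†‖₂⁴}·‖E‖_F² − (‖A†EB†‖_F² + ‖B†EA†‖_F²). -/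

import Mathlib

open Matrix

/-- The square of the Frobenius norm of a complex matrix. -/
noncomputable def frobSq {α β : Type*} [Fintype α] [Fintype β] (M : Matrix α β ℂ) : ℝ :=
  ∑ i, ∑ j, ‖M i j‖ ^ 2

/-- The spectral norm (ℓ²-operator norm) of a complex matrix. -/
noncomputable def spec {α β : Type*} [Fintype α] [Fintype β] [DecidableEq β]
    (M : Matrix α β ℂ) : ℝ :=
  ‖LinearMap.toContinuousLinearMap (Matrix.toEuclideanLin M)‖

/-- `X` is the Moore–Penrose inverse of `M` (the four Penrose equations). -/
def IsMoorePenrose {α β : Type*} [Fintype α] [Fintype β]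
    (M : Matrix α β ℂ) (X : Matrix β α ℂ) : Prop :=
  M * X * M = M ∧ X * M * X = X ∧ (M * X)ᴴ = M * X ∧ (X * M)ᴴ = X * M

/-!
With `P = A A†` and `Q = B† B` (orthogonal projections), `B† - A†` splits into three
Frobenius-orthogonal pieces `B† (1 - P)`, `-B† E A†` and `-(1 - Q) A†`. Since `B† = B† B†ᴴ Bᴴ` and
`A† = Aᴴ A†ᴴ A†`, the first and last are at most `‖B†‖₂⁴ ‖(1 - P) B‖_F²` and
`‖A†‖₂⁴ ‖A (1 - Q)‖_F²`. Here `(1 - P) B = (1 - P) E` and `A (1 - Q) = -E (1 - Q)`, and as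
`(1 - P) E (1 - Q) = 0` these two Frobenius norms add up to `‖E‖_F² - ‖P E Q‖_F²`, and `‖P E Q‖_F²` dominates both ratios in `δ₁`. Hence
`‖B† - A†‖_F² ≤ ‖B† E A†‖_F² + δ₁`; exchanging `A` and `B` gives the bound with `δ₂`, and the
first inequality is the average. The second one follows from `A† E B† = A† E B† B B†`.
-/

open scoped Matrix.Norms.L2Operator

lemma sq_mul_sq_le_max_pow_four (a b : ℝ) : a ^ 2 * b ^ 2 ≤ max (a ^ 4) (b ^ 4) := by
  nlinarith [le_max_left (a ^ 4) (b ^ 4), le_max_right (a ^ 4) (b ^ 4), sq_nonneg (a ^ 2 - b ^ 2)]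

section FrobeniusAndSpectral

variable {α β γ : Type*} [Fintype α] [Fintype β] [Fintype γ]

lemma frobSq_eq_re_trace (M : Matrix α β ℂ) : frobSq M = (trace (M * Mᴴ)).re := by
  simp [frobSq, trace, mul_apply, Complex.mul_conj, Complex.sq_norm]

lemma frobSq_nonneg (M : Matrix α β ℂ) : 0 ≤ frobSq M := by
  unfold frobSq; positivity

lemma frobSq_conjTranspose (M : Matrix α β ℂ) : frobSq Mᴴ = frobSq M := by
  rw [frobSq_eq_re_trace, frobSq_eq_re_trace, conjTranspose_conjTranspose, trace_mul_comm]

lemma frobSq_neg (M : Matrix α β ℂ) : frobSq (-M) = frobSq M := by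
  simp [frobSq]

lemma frobSq_sub_comm (M N : Matrix α β ℂ) : frobSq (M - N) = frobSq (N - M) := by
  rw [← frobSq_neg, neg_sub]

lemma frobSq_add_of_mul_conjTranspose_eq_zero {M N : Matrix α β ℂ} (h : M * Nᴴ = 0) :
    frobSq (M + N) = frobSq M + frobSq N := by
  have h' : N * Mᴴ = 0 := by rw [← conjTranspose_conjTranspose N, ← conjTranspose_mul, h,
    conjTranspose_zero]
  simp only [frobSq_eq_re_trace, conjTranspose_add, Matrix.add_mul, Matrix.mul_add, h, h',
    add_zero, zero_add, trace_add, Complex.add_re]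

lemma frobSq_add_of_conjTranspose_mul_eq_zero {M N : Matrix α β ℂ} (h : Mᴴ * N = 0) :
    frobSq (M + N) = frobSq M + frobSq N := by
  rw [← frobSq_conjTranspose, conjTranspose_add,
    frobSq_add_of_mul_conjTranspose_eq_zero (by rwa [conjTranspose_conjTranspose]),
    frobSq_conjTranspose, frobSq_conjTranspose]

lemma spec_eq_zero_iff [DecidableEq β] {M : Matrix α β ℂ} : spec M = 0 ↔ M = 0 :=
  norm_eq_zero (E := Matrix α β ℂ)

lemma spec_nonneg [DecidableEq β] (M : Matrix α β ℂ) : 0 ≤ spec M := norm_nonneg _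

lemma spec_conjTranspose [DecidableEq α] [DecidableEq β] (M : Matrix α β ℂ) :
    spec Mᴴ = spec M :=
  l2_opNorm_conjTranspose M

lemma spec_conjTranspose_mul_self [DecidableEq β] (M : Matrix α β ℂ) :
    spec (Mᴴ * M) = spec M ^ 2 :=
  (l2_opNorm_conjTranspose_mul_self M).trans (sq (spec M)).symm

lemma spec_mul_conjTranspose_self [DecidableEq α] [DecidableEq β] (M : Matrix α β ℂ) :
    spec (M * Mᴴ) = spec M ^ 2 := by
  simpa only [conjTranspose_conjTranspose, spec_conjTranspose] using spec_conjTranspose_mul_self Mᴴ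

lemma frobSq_eq_sum_norm_sq_col (M : Matrix α β ℂ) :
    frobSq M = ∑ j, ‖(EuclideanSpace.equiv α ℂ).symm (Mᵀ j)‖ ^ 2 := by
  rw [frobSq, Finset.sum_comm]
  simp [EuclideanSpace.norm_sq_eq]

lemma frobSq_mul_le_spec_sq_mul [DecidableEq β] (M : Matrix α β ℂ) (N : Matrix β γ ℂ) :
    frobSq (M * N) ≤ spec M ^ 2 * frobSq N := by
  rw [frobSq_eq_sum_norm_sq_col, frobSq_eq_sum_norm_sq_col, Finset.mul_sum]
  refine Finset.sum_le_sum fun j _ => ?_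
  have hcol : (M * N)ᵀ j = M *ᵥ Nᵀ j := by
    ext i; simp [mul_apply, mulVec, dotProduct]
  rw [hcol, ← mul_pow]
  exact pow_le_pow_left₀ (norm_nonneg _) (l2_opNorm_mulVec M _) 2

lemma frobSq_mul_le_mul_spec_sq [DecidableEq β] [DecidableEq γ]
    (M : Matrix α β ℂ) (N : Matrix β γ ℂ) :
    frobSq (M * N) ≤ frobSq M * spec N ^ 2 := by
  have h := frobSq_mul_le_spec_sq_mul Nᴴ Mᴴ
  rwa [← conjTranspose_mul, frobSq_conjTranspose, frobSq_conjTranspose, spec_conjTranspose,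
    mul_comm] at h

end FrobeniusAndSpectral

section Projections

variable {α β : Type*} [Fintype α] [Fintype β]

lemma frobSq_mul_add_frobSq_sub_mul {P : Matrix α α ℂ} (hP : IsStarProjection P)
    (M : Matrix α β ℂ) : frobSq (P * M) + frobSq (M - P * M) = frobSq M := by
  have hPs : Pᴴ = P := hP.isSelfAdjoint
  have horth : (P * M)ᴴ * (M - P * M) = 0 := by
    rw [conjTranspose_mul, hPs, Matrix.mul_sub, Matrix.mul_assoc, Matrix.mul_assoc,
      ← Matrix.mul_assoc P P, hP.isIdempotentElem.eq, sub_self]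
  rw [← frobSq_add_of_conjTranspose_mul_eq_zero horth, add_sub_cancel]

lemma frobSq_mul_add_frobSq_sub_mul_right {Q : Matrix β β ℂ} (hQ : IsStarProjection Q)
    (M : Matrix α β ℂ) : frobSq (M * Q) + frobSq (M - M * Q) = frobSq M := by
  have hQs : Qᴴ = Q := hQ.isSelfAdjoint
  simpa only [← frobSq_conjTranspose (M * Q), ← frobSq_conjTranspose (M - M * Q),
    ← frobSq_conjTranspose M, conjTranspose_mul, conjTranspose_sub, hQs]
    using frobSq_mul_add_frobSq_sub_mul hQ Mᴴ

lemma frobSq_eq_add_add_of_isStarProjection {P : Matrix α α ℂ} {Q : Matrix β β ℂ}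
    (hP : IsStarProjection P) (hQ : IsStarProjection Q) (M : Matrix α β ℂ) :
    frobSq M = frobSq (P * M * Q) + frobSq (P * M - P * M * Q) + frobSq (M - P * M) := by
  rw [frobSq_mul_add_frobSq_sub_mul_right hQ, frobSq_mul_add_frobSq_sub_mul hP]

end Projections

namespace IsMoorePenrose

variable {α β γ : Type*} [Fintype α] [Fintype β]
  {A B : Matrix α β ℂ} {X Y : Matrix β α ℂ}

lemma isStarProjection_mul (h : IsMoorePenrose A X) : IsStarProjection (A * X) :=
  ⟨by rw [IsIdempotentElem, ← Matrix.mul_assoc, h.1], h.2.2.1⟩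

lemma isStarProjection_mul' (h : IsMoorePenrose A X) : IsStarProjection (X * A) :=
  ⟨by rw [IsIdempotentElem, ← Matrix.mul_assoc, h.2.1], h.2.2.2⟩

lemma mul_mul_mul_self (h : IsMoorePenrose A X) (M : Matrix γ α ℂ) :
    M * A * X * A = M * A := by
  rw [Matrix.mul_assoc, Matrix.mul_assoc, ← Matrix.mul_assoc A, h.1]

lemma mul_mul_mul_self' (h : IsMoorePenrose A X) (M : Matrix γ β ℂ) :
    M * X * A * X = M * X := by
  rw [Matrix.mul_assoc, Matrix.mul_assoc, ← Matrix.mul_assoc X, h.2.1]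

lemma eq_mul_conjTranspose_mul (h : IsMoorePenrose A X) : X = X * Xᴴ * Aᴴ := by
  rw [Matrix.mul_assoc, ← conjTranspose_mul, h.2.2.1, ← Matrix.mul_assoc, h.2.1]

lemma eq_conjTranspose_mul_mul (h : IsMoorePenrose A X) : X = Aᴴ * Xᴴ * X := by
  rw [← conjTranspose_mul, h.2.2.2, h.2.1]

lemma frobSq_inv_sub_eq (hA : IsMoorePenrose A X) (hB : IsMoorePenrose B Y) :
    frobSq (Y - X) =
      frobSq (Y * (B - A) * X) + frobSq (Y - Y * (A * X)) + frobSq (X - Y * B * X) := by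
  have h := frobSq_eq_add_add_of_isStarProjection hB.isStarProjection_mul'
    hA.isStarProjection_mul (Y - X)
  have h₁ : Y * B * (Y - X) * (A * X) = -(Y * (B - A) * X) := by
    simp only [Matrix.mul_sub, Matrix.sub_mul, ← Matrix.mul_assoc, hB.2.1, hA.mul_mul_mul_self']
    abel
  have h₂ : Y * B * (Y - X) - Y * B * (Y - X) * (A * X) = Y - Y * (A * X) := by
    simp only [Matrix.mul_sub, Matrix.sub_mul, ← Matrix.mul_assoc, hB.2.1, hA.mul_mul_mul_self']
    abel
  have h₃ : Y - X - Y * B * (Y - X) = -(X - Y * B * X) := by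
    simp only [Matrix.mul_sub, hB.2.1]
    abel
  rw [h₂, h₁, h₃, frobSq_neg, frobSq_neg] at h
  linarith

lemma frobSq_sub_eq (hA : IsMoorePenrose A X) (hB : IsMoorePenrose B Y) :
    frobSq (B - A) = frobSq (A * X * (B - A) * (Y * B)) + frobSq (A - A * (Y * B))
      + frobSq (B - A * X * B) := by
  have h := frobSq_eq_add_add_of_isStarProjection hA.isStarProjection_mul
    hB.isStarProjection_mul' (B - A)
  have h₁ : A * X * (B - A) - A * X * (B - A) * (Y * B) = -(A - A * (Y * B)) := by
    simp only [Matrix.mul_sub, Matrix.sub_mul, ← Matrix.mul_assoc, hA.1, hB.mul_mul_mul_self]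
    abel
  have h₂ : B - A - A * X * (B - A) = B - A * X * B := by
    simp only [Matrix.mul_sub, hA.1]
    abel
  rw [h₁, h₂, frobSq_neg] at h
  linarith

lemma frobSq_sub_mul_proj_le [DecidableEq α] [DecidableEq β] (hB : IsMoorePenrose B Y) {P : Matrix α α ℂ}
    (hP : IsStarProjection P) : frobSq (Y - Y * P) ≤ spec Y ^ 4 * frobSq (B - P * B) := by
  have hPs : Pᴴ = P := hP.isSelfAdjoint
  have hY : Y - Y * P = Y * Yᴴ * (B - P * B)ᴴ := by
    conv_lhs => rw [hB.eq_mul_conjTranspose_mul]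
    rw [conjTranspose_sub, conjTranspose_mul, hPs, Matrix.mul_sub]
    simp only [Matrix.mul_assoc]
  calc frobSq (Y - Y * P) ≤ spec (Y * Yᴴ) ^ 2 * frobSq (B - P * B)ᴴ :=
        hY ▸ frobSq_mul_le_spec_sq_mul _ _
    _ = spec Y ^ 4 * frobSq (B - P * B) := by
        rw [spec_mul_conjTranspose_self, frobSq_conjTranspose, ← pow_mul]

lemma frobSq_sub_proj_mul_le [DecidableEq α] (hA : IsMoorePenrose A X) {Q : Matrix β β ℂ}
    (hQ : IsStarProjection Q) : frobSq (X - Q * X) ≤ spec X ^ 4 * frobSq (A - A * Q) := by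
  have hQs : Qᴴ = Q := hQ.isSelfAdjoint
  have hX : X - Q * X = (A - A * Q)ᴴ * (Xᴴ * X) := by
    conv_lhs => rw [hA.eq_conjTranspose_mul_mul]
    rw [conjTranspose_sub, conjTranspose_mul, hQs, Matrix.sub_mul]
    simp only [Matrix.mul_assoc]
  calc frobSq (X - Q * X) ≤ frobSq (A - A * Q)ᴴ * spec (Xᴴ * X) ^ 2 :=
        hX ▸ frobSq_mul_le_mul_spec_sq _ _
    _ = spec X ^ 4 * frobSq (A - A * Q) := by
        rw [spec_conjTranspose_mul_self, frobSq_conjTranspose, ← pow_mul, mul_comm]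

lemma max_frobSq_div_le [DecidableEq α] [DecidableEq β] (hA : IsMoorePenrose A X) (hB : IsMoorePenrose B Y)
    (E : Matrix α β ℂ) :
    max (frobSq (A * X * E * Y) / spec Y ^ 2) (frobSq (X * E * Y * B) / spec X ^ 2)
      ≤ frobSq (A * X * E * (Y * B)) := by
  have hY : A * X * E * Y = A * X * E * (Y * B) * Y := by
    rw [Matrix.mul_assoc _ (Y * B), hB.2.1]
  have hX : X * E * Y * B = X * (A * X * E * (Y * B)) := by
    simp only [← Matrix.mul_assoc, hA.2.1]
  refine max_le (div_le_of_le_mul₀ (sq_nonneg _) (frobSq_nonneg _) ?_)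
    (div_le_of_le_mul₀ (sq_nonneg _) (frobSq_nonneg _) ?_)
  · exact hY ▸ frobSq_mul_le_mul_spec_sq _ _
  · rw [mul_comm]
    exact hX ▸ frobSq_mul_le_spec_sq_mul _ _

lemma frobSq_mul_mul_le [DecidableEq α] [DecidableEq β] (hB : IsMoorePenrose B Y) (X : Matrix β α ℂ) (E : Matrix α β ℂ) :
    frobSq (X * E * Y)
      ≤ max (spec X ^ 4) (spec Y ^ 4) * (frobSq (X * E * Y * B) / spec X ^ 2) := by
  rcases (spec_nonneg X).eq_or_lt with hX | hX
  · simp [spec_eq_zero_iff.mp hX.symm, frobSq]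
  have hY : frobSq (X * E * Y) ≤ frobSq (X * E * Y * B) * spec Y ^ 2 := by
    conv_lhs => rw [← hB.2.1, ← Matrix.mul_assoc, ← Matrix.mul_assoc]
    exact frobSq_mul_le_mul_spec_sq _ _
  rw [mul_div_assoc', le_div_iff₀ (by positivity)]
  calc frobSq (X * E * Y) * spec X ^ 2
      ≤ frobSq (X * E * Y * B) * spec Y ^ 2 * spec X ^ 2 := by gcongr
    _ = spec X ^ 2 * spec Y ^ 2 * frobSq (X * E * Y * B) := by ring
    _ ≤ max (spec X ^ 4) (spec Y ^ 4) * frobSq (X * E * Y * B) := by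
        gcongr
        · exact frobSq_nonneg _
        · exact sq_mul_sq_le_max_pow_four _ _

end IsMoorePenrose

section Perturbation

variable {α β : Type*} [Fintype α] [Fintype β] [DecidableEq α] [DecidableEq β]

/-- `δ₁` of the statement, for `X = A†` and `Y = B†`; `δ₂` is `perturbationDelta B Y A X`. -/
noncomputable def perturbationDelta (A : Matrix α β ℂ) (X : Matrix β α ℂ) (B : Matrix α β ℂ)
    (Y : Matrix β α ℂ) : ℝ :=
  max (spec X ^ 4) (spec Y ^ 4) * (frobSq (B - A)
    - max (frobSq (A * X * (B - A) * Y) / spec Y ^ 2) (frobSq (X * (B - A) * Y * B) / spec X ^ 2))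

variable {A B : Matrix α β ℂ} {X Y : Matrix β α ℂ}

lemma frobSq_sub_le_perturbationDelta (hA : IsMoorePenrose A X) (hB : IsMoorePenrose B Y) :
    frobSq (Y - X) ≤ frobSq (Y * (B - A) * X) + perturbationDelta A X B Y := by
  set M := max (spec X ^ 4) (spec Y ^ 4)
  have hM : 0 ≤ M := le_max_of_le_left (by positivity)
  have hYP := hB.frobSq_sub_mul_proj_le hA.isStarProjection_mul
  have hQX := hA.frobSq_sub_proj_mul_le hB.isStarProjection_mul'
  have hlow := hA.max_frobSq_div_le hB (B - A)
  have hsplit := hA.frobSq_sub_eq hB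
  have hYP' : spec Y ^ 4 * frobSq (B - A * X * B) ≤ M * frobSq (B - A * X * B) :=
    mul_le_mul_of_nonneg_right (le_max_right _ _) (frobSq_nonneg _)
  have hQX' : spec X ^ 4 * frobSq (A - A * (Y * B)) ≤ M * frobSq (A - A * (Y * B)) :=
    mul_le_mul_of_nonneg_right (le_max_left _ _) (frobSq_nonneg _)
  have hsum : M * (frobSq (A - A * (Y * B)) + frobSq (B - A * X * B))
      ≤ M * (frobSq (B - A) - max (frobSq (A * X * (B - A) * Y) / spec Y ^ 2)
          (frobSq (X * (B - A) * Y * B) / spec X ^ 2)) :=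
    mul_le_mul_of_nonneg_left (by linarith) hM
  rw [hA.frobSq_inv_sub_eq hB, perturbationDelta]
  linarith

lemma perturbationDelta_le (hB : IsMoorePenrose B Y) :
    perturbationDelta A X B Y
      ≤ max (spec X ^ 4) (spec Y ^ 4) * frobSq (B - A) - frobSq (X * (B - A) * Y) := by
  have hM : 0 ≤ max (spec X ^ 4) (spec Y ^ 4) := le_max_of_le_left (by positivity)
  have h := hB.frobSq_mul_mul_le X (B - A)
  have := mul_le_mul_of_nonneg_left (le_max_right (frobSq (A * X * (B - A) * Y) / spec Y ^ 2)
    (frobSq (X * (B - A) * Y * B) / spec X ^ 2)) hM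
  rw [perturbationDelta, mul_sub]
  linarith

end Perturbation

theorem stmt14_general {m n : ℕ}
    (A B : Matrix (Fin m) (Fin n) ℂ)
    (Adag Bdag : Matrix (Fin n) (Fin m) ℂ)
    (hA : IsMoorePenrose A Adag) (hB : IsMoorePenrose B Bdag)
    (E : Matrix (Fin m) (Fin n) ℂ) (hE : E = B - A)
    (δ₁ δ₂ : ℝ)
    (hδ₁ : δ₁ = max (spec Adag ^ 4) (spec Bdag ^ 4)
        * (frobSq E - max (frobSq (A * Adag * E * Bdag) / spec Bdag ^ 2)
            (frobSq (Adag * E * Bdag * B) / spec Adag ^ 2)))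
    (hδ₂ : δ₂ = max (spec Adag ^ 4) (spec Bdag ^ 4)
        * (frobSq E - max (frobSq (B * Bdag * E * Adag) / spec Adag ^ 2)
            (frobSq (Bdag * E * Adag * A) / spec Bdag ^ 2))) :
    frobSq (Bdag - Adag)
        ≤ 1 / 2 * (δ₁ + δ₂ + frobSq (Adag * E * Bdag) + frobSq (Bdag * E * Adag))
    ∧ δ₁ + δ₂ ≤ 2 * max (spec Adag ^ 4) (spec Bdag ^ 4) * frobSq E
        - (frobSq (Adag * E * Bdag) + frobSq (Bdag * E * Adag)) := by
  subst hE
  have hAB : A - B = -(B - A) := (neg_sub B A).symm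
  have e₁ : δ₁ = perturbationDelta A Adag B Bdag := hδ₁
  have e₂ : δ₂ = perturbationDelta B Bdag A Adag := by
    simp only [hδ₂, perturbationDelta, max_comm (spec Bdag ^ 4), hAB, Matrix.mul_neg,
      Matrix.neg_mul, frobSq_neg]
  have d₁ := frobSq_sub_le_perturbationDelta hA hB
  have d₂ := frobSq_sub_le_perturbationDelta hB hA
  have c₁ := perturbationDelta_le (A := A) (X := Adag) hB
  have c₂ := perturbationDelta_le (A := B) (X := Bdag) hA
  rw [frobSq_sub_comm, hAB, Matrix.mul_neg, Matrix.neg_mul, frobSq_neg] at d₂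
  rw [max_comm, hAB, frobSq_neg, Matrix.mul_neg, Matrix.neg_mul, frobSq_neg] at c₂
  constructor <;> linarith

theorem stmt14 {m n : ℕ}
    (A B : Matrix (Fin m) (Fin n) ℂ)
    (Adag Bdag : Matrix (Fin n) (Fin m) ℂ)
    (hA : IsMoorePenrose A Adag) (hB : IsMoorePenrose B Bdag)
    (hA0 : A ≠ 0) (hB0 : B ≠ 0)
    (E : Matrix (Fin m) (Fin n) ℂ) (hE : E = B - A)
    (δ₁ δ₂ : ℝ)
    (hδ₁ : δ₁ = max (spec Adag ^ 4) (spec Bdag ^ 4)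
        * (frobSq E - max (frobSq (A * Adag * E * Bdag) / spec Bdag ^ 2)
            (frobSq (Adag * E * Bdag * B) / spec Adag ^ 2)))
    (hδ₂ : δ₂ = max (spec Adag ^ 4) (spec Bdag ^ 4)
        * (frobSq E - max (frobSq (B * Bdag * E * Adag) / spec Adag ^ 2)
            (frobSq (Bdag * E * Adag * A) / spec Bdag ^ 2))) :
    frobSq (Bdag - Adag)
        ≤ 1 / 2 * (δ₁ + δ₂ + frobSq (Adag * E * Bdag) + frobSq (Bdag * E * Adag))
    ∧ δ₁ + δ₂ ≤ 2 * max (spec Adag ^ 4) (spec Bdag ^ 4) * frobSq E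
        - (frobSq (Adag * E * Bdag) + frobSq (Bdag * E * Adag)) :=
  stmt14_general A B Adag Bdag hA hB E hE δ₁ δ₂ hδ₁ hδ₂
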